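/- arXiv:2005.12023 — 4 statements merged into one kernel-verified Lean document; each statement's English description precedes it below -/
import Mathlib

section
/- For every ℝ-linear isometric bijection f : ℍ → ℍ with determinant 1 (i.e., every element of SO(4) acting on ℍ ≅ ℝ⁴), there exist unit quaternions p and q such that f(h) = p h q⁻¹ for every quaternion h. In other words, the group homomorphism Φ : S³ × S³ → SO(4), (p,q) ↦ Φ_{p,q}, is surjective. -/
/-!
By Cartan–Dieudonné, `f` is a product of reflections in hyperplanes `wᗮ`, and for a unit
quaternion `w` this reflection is `h ↦ -(w * star h * w)`. Composing such maps alternates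
between the shapes `h ↦ p * h * q` and `h ↦ p * star h * q` with `p`, `q` unit quaternions,
while each reflection flips the sign of the determinant; so determinant `1` forces the first shape.
-/

open Quaternion
open scoped Quaternion

theorem Submodule.det_reflection_orthogonal_span_singleton {E : Type*} [NormedAddCommGroup E]
    [InnerProductSpace ℝ E] [FiniteDimensional ℝ E] {v : E} (hv : v ≠ 0) :
    LinearMap.det (ℝ ∙ v)ᗮ.reflection.toLinearMap = -1 := by
  rw [Submodule.det_reflection, Submodule.orthogonal_orthogonal, finrank_span_singleton hv,
    pow_one]

namespace Quaternion

theorem reflection_orthogonal_span_singleton_apply {w : ℍ[ℝ]} (hw : ‖w‖ = 1) (h : ℍ[ℝ]) :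
    (ℝ ∙ w)ᗮ.reflection h = -(w * star h * w) := by
  have hw' : star w * w = 1 := by
    rw [star_mul_self, normSq_eq_norm_mul_self, hw, one_mul, coe_one]
  -- `w * star h * w = (w * star h + star (w * star h)) * w - h`, and the bracket is real
  have hsandwich : w * star h * w = ((2 * (w * star h).re : ℝ) : ℍ[ℝ]) * w - h := by
    rw [← self_add_star' (w * star h), star_mul, star_star, add_mul, mul_assoc h, hw', mul_one,
      add_sub_cancel_right]
  rw [Submodule.reflection_orthogonal_apply, Submodule.reflection_singleton_apply, hw,
    hsandwich, coe_mul_eq_smul, inner_def, RCLike.ofReal_one, one_pow, div_one]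
  module

theorem exists_reflection_orthogonal_span_singleton_eq {v : ℍ[ℝ]} (hv : v ≠ 0) :
    ∃ w : ℍ[ℝ], ‖w‖ = 1 ∧ ∀ h, (ℝ ∙ v)ᗮ.reflection h = -(w * star h * w) := by
  have hv' : ‖v‖ ≠ 0 := norm_ne_zero_iff.2 hv
  have hw : ‖‖v‖⁻¹ • v‖ = 1 := by rw [norm_smul, norm_inv, norm_norm, inv_mul_cancel₀ hv']
  refine ⟨‖v‖⁻¹ • v, hw, ?_⟩
  simp only [← Submodule.span_singleton_smul_eq (isUnit_iff_ne_zero.2 (inv_ne_zero hv')) v]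
  exact reflection_orthogonal_span_singleton_apply hw

def IsUnitBimul (f : ℍ[ℝ] → ℍ[ℝ]) : Prop :=
  ∃ p q : ℍ[ℝ], ‖p‖ = 1 ∧ ‖q‖ = 1 ∧ ∀ h, f h = p * h * q

def IsUnitBimulStar (f : ℍ[ℝ] → ℍ[ℝ]) : Prop :=
  ∃ p q : ℍ[ℝ], ‖p‖ = 1 ∧ ‖q‖ = 1 ∧ ∀ h, f h = p * star h * q

section

variable {f : ℍ[ℝ] → ℍ[ℝ]} {v : ℍ[ℝ]}

theorem IsUnitBimul.reflection_comp (hf : IsUnitBimul f) (hv : v ≠ 0) :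
    IsUnitBimulStar ((ℝ ∙ v)ᗮ.reflection ∘ f) := by
  obtain ⟨p, q, hp, hq, hf⟩ := hf
  obtain ⟨w, hw, hρ⟩ := exists_reflection_orthogonal_span_singleton_eq hv
  refine ⟨-(w * star q), star p * w, by simp [hw, hq], by simp [hw, hp], fun h => ?_⟩
  simp only [Function.comp_apply, hρ, hf, star_mul, neg_mul, mul_assoc]

theorem IsUnitBimulStar.reflection_comp (hf : IsUnitBimulStar f) (hv : v ≠ 0) :
    IsUnitBimul ((ℝ ∙ v)ᗮ.reflection ∘ f) := by
  obtain ⟨p, q, hp, hq, hf⟩ := hf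
  obtain ⟨w, hw, hρ⟩ := exists_reflection_orthogonal_span_singleton_eq hv
  refine ⟨-(w * star q), star p * w, by simp [hw, hq], by simp [hw, hp], fun h => ?_⟩
  simp only [Function.comp_apply, hρ, hf, star_mul, star_star, neg_mul, mul_assoc]

end

theorem reflection_orthogonal_span_zero : (ℝ ∙ (0 : ℍ[ℝ]))ᗮ.reflection = 1 := by
  ext h : 1
  apply Submodule.reflection_mem_subspace_eq_self
  simp

theorem reflection_mul_of_det {φ : ℍ[ℝ] ≃ₗᵢ[ℝ] ℍ[ℝ]}
    (h1 : LinearMap.det φ.toLinearEquiv.toLinearMap = 1 → IsUnitBimul φ)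
    (h2 : LinearMap.det φ.toLinearEquiv.toLinearMap = -1 → IsUnitBimulStar φ) (v : ℍ[ℝ]) :
    letI ψ := (ℝ ∙ v)ᗮ.reflection * φ
    (LinearMap.det ψ.toLinearEquiv.toLinearMap = 1 → IsUnitBimul ψ) ∧
      (LinearMap.det ψ.toLinearEquiv.toLinearMap = -1 → IsUnitBimulStar ψ) := by
  obtain rfl | hv := eq_or_ne v 0
  · rw [reflection_orthogonal_span_zero, one_mul]
    exact ⟨h1, h2⟩
  have hdet : LinearMap.det ((ℝ ∙ v)ᗮ.reflection * φ).toLinearEquiv.toLinearMap =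
      -LinearMap.det φ.toLinearEquiv.toLinearMap := by
    rw [show ((ℝ ∙ v)ᗮ.reflection * φ).toLinearEquiv.toLinearMap =
      (ℝ ∙ v)ᗮ.reflection.toLinearMap ∘ₗ φ.toLinearEquiv.toLinearMap from rfl,
      LinearMap.det_comp, Submodule.det_reflection_orthogonal_span_singleton hv, neg_one_mul]
  rw [hdet, LinearIsometryEquiv.coe_mul]
  constructor
  · intro h
    exact (h2 (neg_eq_iff_eq_neg.1 h)).reflection_comp hv
  · intro h
    exact (h1 (by linarith)).reflection_comp hv

theorem isUnitBimul_prod_reflections (l : List ℍ[ℝ]) :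
    letI φ : ℍ[ℝ] ≃ₗᵢ[ℝ] ℍ[ℝ] := (l.map fun v => (ℝ ∙ v)ᗮ.reflection).prod
    (LinearMap.det φ.toLinearEquiv.toLinearMap = 1 → IsUnitBimul φ) ∧
      (LinearMap.det φ.toLinearEquiv.toLinearMap = -1 → IsUnitBimulStar φ) := by
  induction l with
  | nil =>
    refine ⟨fun _ => ⟨1, 1, norm_one, norm_one, fun h => by simp⟩, fun h => ?_⟩
    rw [List.map_nil, List.prod_nil,
      show (1 : ℍ[ℝ] ≃ₗᵢ[ℝ] ℍ[ℝ]).toLinearEquiv.toLinearMap = LinearMap.id from rfl,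
      LinearMap.det_id] at h
    norm_num at h
  | cons v l ih =>
    rw [List.map_cons, List.prod_cons]
    exact reflection_mul_of_det ih.1 ih.2 v

end Quaternion

/-- Every ℝ-linear isometric bijection of the quaternions with determinant `1` (i.e. every
element of `SO(4)` acting on `ℍ ≅ ℝ⁴`) is of the form `h ↦ p * h * q⁻¹` for some unit
quaternions `p` and `q`: the homomorphism `Φ : S³ × S³ → SO(4)` is surjective. -/
theorem stmt2 (f : ℍ[ℝ] ≃ₗᵢ[ℝ] ℍ[ℝ])
    (hdet : LinearMap.det (f.toLinearEquiv.toLinearMap) = 1) :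
    ∃ p q : ℍ[ℝ], ‖p‖ = 1 ∧ ‖q‖ = 1 ∧ ∀ h : ℍ[ℝ], f h = p * h * q⁻¹ := by
  obtain ⟨l, -, rfl⟩ := f.reflections_generate_dim
  obtain ⟨p, q, hp, hq, hf⟩ := (isUnitBimul_prod_reflections l).1 hdet
  exact ⟨p, q⁻¹, hp, by rw [norm_inv, hq, inv_one], fun h => by rw [hf, inv_inv]⟩
end

section
/- The homomorphism ρ, sending a unit quaternion q to the restriction to W of the conjugation map h ↦ q h q⁻¹, is a surjective group homomorphism from the group of unit quaternions onto the group of orientation-preserving linear isometries of W (the rotation group of the 3-dimensional space W, i.e. SO(3)), and its kernel is {1, −1}. -/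
/-
Conjugation by a nonzero quaternion preserves the real part, hence `W`, and is multiplicative
in `q`. For pure `v, h` one has `v h v = ‖v‖² h - 2⟪v, h⟫ v`, so for a nonzero pure `v` the
map `h ↦ -v h v⁻¹` is the reflection of `W` in the plane `v^⊥`. By Cartan–Dieudonné every
isometry of `W` is a product of such reflections, hence equals `±(conjugation by q)` for a
nonzero `q`, which may be normalised to a unit. Conjugation by a unit has determinant `1`, so
the sign is `+` exactly when the determinant is `1`. Finally, a quaternion commuting with `i`
and `j` is real, and the real unit quaternions are `±1`.
-/

open Quaternion
open scoped Quaternion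

/-- The 3-dimensional real subspace `W` of purely imaginary quaternions. -/
def W : Submodule ℝ ℍ[ℝ] where
  carrier := {h : ℍ[ℝ] | h.re = 0}
  add_mem' := by
    intro a b ha hb
    simp only [Set.mem_setOf_eq] at *
    simp [ha, hb]
  zero_mem' := by simp
  smul_mem' := by
    intro c a ha
    simp only [Set.mem_setOf_eq] at *
    simp [ha]

namespace Quaternion

theorem re_mul_comm {R : Type*} [CommRing R] (a b : ℍ[R]) : (a * b).re = (b * a).re := by
  simp only [re_mul]; ring

theorem re_mul_mul_inv_of_re_eq_zero (q : ℍ[ℝ]) {h : ℍ[ℝ]} (hh : h.re = 0) :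
    (q * h * q⁻¹).re = 0 := by
  rcases eq_or_ne q 0 with rfl | hq
  · simp
  · rw [re_mul_comm, ← mul_assoc, inv_mul_cancel₀ hq, one_mul, hh]

theorem inv_eq_star_of_norm_eq_one {q : ℍ[ℝ]} (hq : ‖q‖ = 1) : q⁻¹ = star q := by
  rw [inv_def, normSq_eq_norm_mul_self, hq, one_mul, inv_one, one_smul]

theorem mul_mul_self_of_re_eq_zero {a b : ℍ[ℝ]} (ha : a.re = 0) (hb : b.re = 0) :
    a * b * a = normSq a • b - (2 * inner ℝ a b) • a := by
  ext <;> simp [normSq_def', inner_def, ha, hb] <;> ring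

theorem eq_coe_re_of_forall_commute {R : Type*} [CommRing R] [NoZeroDivisors R] [CharZero R]
    {q : ℍ[R]} (hq : ∀ h : ℍ[R], h.re = 0 → q * h = h * q) : q = q.re := by
  have hi := hq ((equivTuple R).symm ![0, 1, 0, 0]) rfl
  have hj := hq ((equivTuple R).symm ![0, 0, 1, 0]) rfl
  -- `re_mul` etc. must fire before `equivTuple_symm_apply` unfolds the literals
  simp only [Quaternion.ext_iff, re_mul, imI_mul, imJ_mul, imK_mul] at hi hj
  simp [self_eq_neg, neg_eq_self] at hi hj
  ext <;> simp [hi, hj]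

end Quaternion

theorem mem_W {h : ℍ[ℝ]} : h ∈ W ↔ h.re = 0 := Iff.rfl

def pureQuat (x y z : ℝ) : ℍ[ℝ] := ⟨0, x, y, z⟩

@[simp] theorem pureQuat_re (x y z : ℝ) : (pureQuat x y z).re = 0 := rfl
@[simp] theorem pureQuat_imI (x y z : ℝ) : (pureQuat x y z).imI = x := rfl
@[simp] theorem pureQuat_imJ (x y z : ℝ) : (pureQuat x y z).imJ = y := rfl
@[simp] theorem pureQuat_imK (x y z : ℝ) : (pureQuat x y z).imK = z := rfl

noncomputable def equivFunW : W ≃ₗ[ℝ] (Fin 3 → ℝ) where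
  toFun h := ![(h : ℍ[ℝ]).imI, (h : ℍ[ℝ]).imJ, (h : ℍ[ℝ]).imK]
  map_add' a b := by funext m; fin_cases m <;> simp
  map_smul' c a := by funext m; fin_cases m <;> simp
  invFun v := ⟨pureQuat (v 0) (v 1) (v 2), rfl⟩
  left_inv a := by ext <;> simp [mem_W.mp a.2]
  right_inv v := by funext m; fin_cases m <;> simp

noncomputable def basisW : Module.Basis (Fin 3) ℝ W := .ofEquivFun equivFunW

theorem finrank_W : Module.finrank ℝ W = 3 := by
  simp [Module.finrank_eq_card_basis basisW]

/-- Defined for every quaternion (conjugation by `0` is `0`); `ρ` is its restriction to the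
unit quaternions. -/
noncomputable def conjW : ℍ[ℝ] →* Module.End ℝ W where
  toFun q := (LinearMap.mulRight ℝ q⁻¹ ∘ₗ LinearMap.mulLeft ℝ q).restrict
    fun _ hh => re_mul_mul_inv_of_re_eq_zero q hh
  map_one' := LinearMap.ext fun h => Subtype.ext <| by simp
  map_mul' p q := LinearMap.ext fun h => Subtype.ext <| by
    change p * q * h * (p * q)⁻¹ = p * (q * h * q⁻¹) * p⁻¹
    simp only [mul_inv_rev, mul_assoc]

@[simp]
theorem coe_conjW_apply (q : ℍ[ℝ]) (h : W) : (conjW q h : ℍ[ℝ]) = q * h * q⁻¹ := rfl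

theorem conjW_smul (q : ℍ[ℝ]) {c : ℝ} (hc : c ≠ 0) : conjW (c • q) = conjW q := by
  refine LinearMap.ext fun h => Subtype.ext ?_
  simp [smul_inv₀, hc]

theorem det_conjW_of_norm_eq_one {q : ℍ[ℝ]} (hq : ‖q‖ = 1) :
    LinearMap.det (conjW q) = 1 := by
  set N := q.re ^ 2 + q.imI ^ 2 + q.imJ ^ 2 + q.imK ^ 2 with hN
  have h1 : N = 1 := by rw [hN, ← normSq_def', normSq_eq_norm_mul_self, hq, one_mul]
  rw [← LinearMap.det_toMatrix basisW, Matrix.det_fin_three]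
  simp only [basisW, equivFunW, Fin.isValue, LinearMap.toMatrix_apply, Module.Basis.coe_ofEquivFun,
    LinearEquiv.symm_mk, LinearMap.coe_mk, AddHom.coe_mk, LinearEquiv.coe_mk, Pi.single_eq_same,
    ne_eq, one_ne_zero, not_false_eq_true, Pi.single_eq_of_ne, Fin.reduceEq,
    Module.Basis.ofEquivFun_repr_apply, coe_conjW_apply, inv_eq_star_of_norm_eq_one hq, imI_mul,
    re_mul, pureQuat_re, mul_zero, pureQuat_imI, mul_one, zero_sub, pureQuat_imJ, sub_zero,
    pureQuat_imK, imI_star, mul_neg, neg_mul, neg_neg, add_zero, re_star, imJ_mul, sub_self,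
    zero_add, imK_star, imK_mul, imJ_star, sub_neg_eq_add, Matrix.cons_val_zero, zero_ne_one,
    Matrix.cons_val_one, Matrix.cons_val]
  -- the determinant of `h ↦ q h (star q)` is `(normSq q) ^ 3`
  linear_combination (N ^ 2 + N + 1) * h1

theorem reflection_orthogonal_singleton_eq_neg_conjW {v : W} (hv : v ≠ 0) :
    (ℝ ∙ v)ᗮ.reflection.toLinearEquiv.toLinearMap = -conjW v := by
  refine LinearMap.ext fun x => Subtype.ext ?_
  have hv' : ‖(v : ℍ[ℝ])‖ ≠ 0 := by simpa using hv
  have hinv : (v : ℍ[ℝ])⁻¹ = -(normSq (v : ℍ[ℝ]))⁻¹ • (v : ℍ[ℝ]) := by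
    rw [inv_def, star_eq_neg.2 v.2, smul_neg, neg_smul]
  simp only [LinearMap.neg_apply, Submodule.coe_neg, coe_conjW_apply]
  rw [hinv, mul_smul_comm, mul_mul_self_of_re_eq_zero v.2 x.2]
  simp only [LinearEquiv.coe_coe, LinearIsometryEquiv.coe_toLinearEquiv,
    Submodule.reflection_orthogonal_apply, Submodule.reflection_singleton_apply,
    Submodule.coe_inner, Submodule.coe_norm, Real.ringHom_apply, neg_sub,
    AddSubgroupClass.coe_sub, SetLike.val_smul_of_tower, nsmul_eq_mul,
    Nat.cast_ofNat, Algebra.mul_smul_comm, two_mul, smul_add, normSq_eq_norm_mul_self, mul_inv_rev,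
    neg_smul, neg_neg]
  match_scalars <;> field_simp

theorem exists_prod_reflections_eq_smul_conjW (l : List W) :
    ∃ q : ℍ[ℝ], q ≠ 0 ∧ ∃ n : ℕ,
    (l.map fun v => (ℝ ∙ v)ᗮ.reflection).prod.toLinearEquiv.toLinearMap =
      (-1 : ℝ) ^ n • conjW q := by
  induction l with
  | nil => exact ⟨1, one_ne_zero, 0, by rw [map_one, pow_zero, one_smul]; rfl⟩
  | cons v l ih =>
    obtain ⟨q, hq, n, hl⟩ := ih
    rcases eq_or_ne v 0 with rfl | hv
    · have hrefl : (ℝ ∙ (0 : W))ᗮ.reflection = 1 :=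
        LinearIsometryEquiv.ext fun x => Submodule.reflection_mem_subspace_eq_self (by simp)
      refine ⟨q, hq, n, ?_⟩
      rw [List.map_cons, List.prod_cons, hrefl, one_mul, hl]
    · refine ⟨v * q, mul_ne_zero (by simpa using hv) hq, n + 1, ?_⟩
      calc _ = (ℝ ∙ v)ᗮ.reflection.toLinearEquiv.toLinearMap *
            (l.map fun v => (ℝ ∙ v)ᗮ.reflection).prod.toLinearEquiv.toLinearMap := rfl
        _ = _ := by
          rw [reflection_orthogonal_singleton_eq_neg_conjW hv, hl, map_mul, neg_mul,
            mul_smul_comm, pow_succ]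
          module

theorem exists_conjW_eq_of_det_eq_one (f : W ≃ₗᵢ[ℝ] W)
    (hf : LinearMap.det f.toLinearEquiv.toLinearMap = 1) :
    ∃ q : ℍ[ℝ], ‖q‖ = 1 ∧ f.toLinearEquiv.toLinearMap = conjW q := by
  obtain ⟨l, -, rfl⟩ := f.reflections_generate_dim
  obtain ⟨q, hq, n, hl⟩ := exists_prod_reflections_eq_smul_conjW l
  have hq' : ‖q‖ ≠ 0 := norm_ne_zero_iff.2 hq
  have hu : ‖‖q‖⁻¹ • q‖ = 1 := by
    rw [norm_smul, norm_inv, norm_norm, inv_mul_cancel₀ hq']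
  rw [hl, ← conjW_smul q (inv_ne_zero hq')] at hf ⊢
  rw [LinearMap.det_smul, det_conjW_of_norm_eq_one hu, finrank_W] at hf
  have hn : (-1 : ℝ) ^ n = 1 :=
    (neg_one_pow_eq_or ℝ n).resolve_right fun h => by norm_num [h] at hf
  exact ⟨_, hu, by rw [hn, one_smul]⟩

theorem conj_eq_self_iff_of_norm_eq_one {q : ℍ[ℝ]} (hq : ‖q‖ = 1) :
    (∀ h : ℍ[ℝ], h.re = 0 → q * h * q⁻¹ = h) ↔ q = 1 ∨ q = -1 := by
  constructor
  · intro H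
    have hq0 : q ≠ 0 := norm_ne_zero_iff.1 (by rw [hq]; exact one_ne_zero)
    have hre : q = q.re := eq_coe_re_of_forall_commute fun h hh =>
      (mul_inv_eq_iff_eq_mul₀ hq0).1 (H h hh)
    rw [hre, norm_coe, Real.norm_eq_abs, abs_eq zero_le_one] at hq
    rcases hq with h | h <;> rw [hre, h] <;> simp
  · rintro (rfl | rfl) h - <;> simp

/-- The map `ρ` sending a unit quaternion `q` to the restriction to `W` of the conjugation
`h ↦ q h q⁻¹` is a surjective group homomorphism from the unit quaternions onto the group
of orientation-preserving linear isometries of `W` (the rotation group `SO(3)` of `W`),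
with kernel `{1, -1}`: conjugation preserves `W` and is multiplicative in `q`, every
linear isometry of `W` of determinant `1` arises as conjugation by some unit quaternion,
and a unit quaternion acts trivially on `W` precisely when it is `1` or `-1`. -/
theorem stmt4 :
    (∀ q : ℍ[ℝ], ‖q‖ = 1 → ∀ h : ℍ[ℝ], h.re = 0 → (q * h * q⁻¹).re = 0) ∧
    (∀ p q : ℍ[ℝ], ‖p‖ = 1 → ‖q‖ = 1 → ∀ h : ℍ[ℝ],
      (p * q) * h * (p * q)⁻¹ = p * (q * h * q⁻¹) * p⁻¹) ∧
    (∀ f : W ≃ₗᵢ[ℝ] W, LinearMap.det (f.toLinearEquiv.toLinearMap) = 1 →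
      ∃ q : ℍ[ℝ], ‖q‖ = 1 ∧ ∀ h : W, ((f h : ℍ[ℝ])) = q * (h : ℍ[ℝ]) * q⁻¹) ∧
    (∀ q : ℍ[ℝ], ‖q‖ = 1 →
      ((∀ h : ℍ[ℝ], h.re = 0 → q * h * q⁻¹ = h) ↔ (q = 1 ∨ q = -1))) := by
  refine ⟨fun q _ _ hh => re_mul_mul_inv_of_re_eq_zero q hh, fun p q _ _ h => ?_,
    fun f hf => ?_, fun q hq => conj_eq_self_iff_of_norm_eq_one hq⟩
  · simp only [mul_inv_rev, mul_assoc]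
  · obtain ⟨q, hq, hfq⟩ := exists_conjW_eq_of_det_eq_one f hf
    exact ⟨q, hq, fun h => congr(($hfq h : ℍ[ℝ]))⟩
end

section
/- Let u and v be coprime positive integers, and consider the circle action on unit quaternions given by w · (z₁ + z₂ j) = wᵛ z₁ + wᵘ z₂ j. The stabilizer of a unit quaternion q = z₁ + z₂ j is: trivial if z₁ ≠ 0 and z₂ ≠ 0; equal to the group of u-th roots of unity {w ∈ ℂ : |w| = 1, wᵘ = 1} if z₁ = 0; and equal to the group of v-th roots of unity {w ∈ ℂ : |w| = 1, wᵛ = 1} if z₂ = 0. -/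
lemma aux_coprime_pow_eq_one {u v : ℕ} (huv : Nat.Coprime u v) {w : ℂ} (hw0 : w ≠ 0)
    (hu : w ^ u = 1) (hv : w ^ v = 1) : w = 1 := by
  have key : w ^ ((u : ℤ) * Nat.gcdA u v + (v : ℤ) * Nat.gcdB u v) = 1 := by
    rw [zpow_add₀ hw0, zpow_mul, zpow_mul]
    simp [zpow_natCast, hu, hv]
  rw [← Nat.gcd_eq_gcd_ab] at key
  simpa [huv] using key

/-- Let `u, v` be coprime positive integers and consider the circle action
`w • (z₁ + z₂ j) = wᵛ z₁ + wᵘ z₂ j` on unit quaternions `z₁ + z₂ j`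
(unit: `|z₁|² + |z₂|² = 1`). The stabilizer of `z₁ + z₂ j` is: trivial if `z₁ ≠ 0` and
`z₂ ≠ 0`; the group of `u`-th roots of unity if `z₁ = 0`; and the group of `v`-th roots
of unity if `z₂ = 0`. -/
theorem stmt7 (u v : ℕ) (hu : 0 < u) (hv : 0 < v) (huv : Nat.Coprime u v)
    (z₁ z₂ : ℂ) (h : Complex.normSq z₁ + Complex.normSq z₂ = 1)
    (w : ℂ) (hw : ‖w‖ = 1) :
    (z₁ ≠ 0 → z₂ ≠ 0 → ((w ^ v * z₁ = z₁ ∧ w ^ u * z₂ = z₂) ↔ w = 1)) ∧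
    (z₁ = 0 → ((w ^ v * z₁ = z₁ ∧ w ^ u * z₂ = z₂) ↔ w ^ u = 1)) ∧
    (z₂ = 0 → ((w ^ v * z₁ = z₁ ∧ w ^ u * z₂ = z₂) ↔ w ^ v = 1)) := by
  have hw0 : w ≠ 0 := by
    intro h0; rw [h0, norm_zero] at hw; norm_num at hw
  refine ⟨fun h1 h2 => ⟨fun ⟨ha, hb⟩ => ?_, fun hw1 => by simp [hw1]⟩,
    fun h1 => ⟨fun ⟨ha, hb⟩ => ?_, fun hw1 => ?_⟩,
    fun h2 => ⟨fun ⟨ha, hb⟩ => ?_, fun hw1 => ?_⟩⟩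
  · have hv1 : w ^ v = 1 := by
      have := mul_right_cancel₀ h1 (by rwa [one_mul] : w ^ v * z₁ = 1 * z₁); exact this
    have hu1 : w ^ u = 1 := by
      have := mul_right_cancel₀ h2 (by rwa [one_mul] : w ^ u * z₂ = 1 * z₂); exact this
    exact aux_coprime_pow_eq_one huv hw0 hu1 hv1
  · have h2 : z₂ ≠ 0 := by
      intro h0; rw [h1, h0] at h; simp at h
    exact mul_right_cancel₀ h2 (by rwa [one_mul] : w ^ u * z₂ = 1 * z₂)
  · subst h1; exact ⟨by simp, by rw [hw1, one_mul]⟩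
  · have h1 : z₁ ≠ 0 := by
      intro h0; rw [h2, h0] at h; simp at h
    exact mul_right_cancel₀ h1 (by rwa [one_mul] : w ^ v * z₁ = 1 * z₁)
  · subst h2; exact ⟨by rw [hw1, one_mul], by simp⟩
end

section
/- Let q = z₁ + z₂ j and w = w₁ + w₂ j be unit quaternions with z₂ ≠ 0 and w₁ z₂ − w₂ z₁ ≠ 0. Write q w⁻¹ = z₁* + z₂* j with z₁*, z₂* ∈ ℂ. Then z₂* ≠ 0 and z₁*/z₂* = (w̄₁ λ + w̄₂)/(−w₂ λ + w₁), where λ = z₁/z₂. (Thus right multiplication by w⁻¹ induces the Möbius transformation λ ↦ (w̄₁ λ + w̄₂)/(−w₂ λ + w₁) on the base of the Hopf fibration.) -/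
/-!
Since `w⁻¹ = (normSq w)⁻¹ • star w` and a real scalar cancels in the ratio `z₁ / z₂`, it suffices
to compute `q * star w`. Using `j z = conj z j`, its coordinates are obtained from `(z₁, z₂)` by
the complex matrix `[[conj w₁, conj w₂], [-w₂, w₁]]`, and the Möbius formula is the
dehomogenization of this linear action.
-/

open Quaternion
open scoped Quaternion

/-- The first complex coordinate of a quaternion `q = z₁ + z₂ j`. -/
def z1 (q : ℍ[ℝ]) : ℂ := ⟨q.re, q.imI⟩

/-- The second complex coordinate of a quaternion `q = z₁ + z₂ j`. -/
def z2 (q : ℍ[ℝ]) : ℂ := ⟨q.imJ, q.imK⟩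

theorem mul_add_mul_div_mul_add_mul_eq {K : Type*} [Field K] (a b c d x : K) {y : K}
    (hy : y ≠ 0) :
    (a * x + b * y) / (c * x + d * y) = (a * (x / y) + b) / (c * (x / y) + d) := by
  rw [← div_div_div_cancel_right₀ hy]
  congr 1 <;> field_simp

@[simp]
theorem z1_zero : z1 0 = 0 := rfl

@[simp]
theorem z2_zero : z2 0 = 0 := rfl

theorem z1_smul (r : ℝ) (q : ℍ[ℝ]) : z1 (r • q) = r * z1 q := by
  apply Complex.ext <;> simp [z1]

theorem z2_smul (r : ℝ) (q : ℍ[ℝ]) : z2 (r • q) = r * z2 q := by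
  apply Complex.ext <;> simp [z2]

theorem z1_mul_star (q w : ℍ[ℝ]) :
    z1 (q * star w) = starRingEnd ℂ (z1 w) * z1 q + starRingEnd ℂ (z2 w) * z2 q := by
  apply Complex.ext <;> simp [z1, z2] <;> ring

theorem z2_mul_star (q w : ℍ[ℝ]) :
    z2 (q * star w) = -z2 w * z1 q + z1 w * z2 q := by
  apply Complex.ext <;> simp [z1, z2] <;> ring

theorem stmt10_general (q w : ℍ[ℝ])
    (hz2 : z2 q ≠ 0) (hD : z1 w * z2 q - z2 w * z1 q ≠ 0) :
    z2 (q * w⁻¹) ≠ 0 ∧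
    z1 (q * w⁻¹) / z2 (q * w⁻¹) =
      ((starRingEnd ℂ) (z1 w) * (z1 q / z2 q) + (starRingEnd ℂ) (z2 w)) /
        (-(z2 w) * (z1 q / z2 q) + z1 w) := by
  have hw : w ≠ 0 := by
    rintro rfl
    simp at hD
  have hr : ((normSq w : ℝ) : ℂ)⁻¹ ≠ 0 := by exact_mod_cast inv_ne_zero (normSq_ne_zero.2 hw)
  rw [inv_def, mul_smul_comm, z1_smul, z2_smul, z1_mul_star, z2_mul_star, Complex.ofReal_inv,
    mul_div_mul_left _ _ hr]
  refine ⟨mul_ne_zero hr ?_, mul_add_mul_div_mul_add_mul_eq _ _ _ _ _ hz2⟩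
  rwa [neg_mul, neg_add_eq_sub]

/-- Let `q = z₁ + z₂ j` and `w = w₁ + w₂ j` be unit quaternions with `z₂ ≠ 0` and
`w₁ z₂ - w₂ z₁ ≠ 0`. Writing `q w⁻¹ = z₁* + z₂* j`, one has `z₂* ≠ 0` and
`z₁*/z₂* = (conj w₁ · λ + conj w₂) / (-w₂ · λ + w₁)` where `λ = z₁/z₂`: right
multiplication by `w⁻¹` induces a Möbius transformation on the base of the Hopf
fibration. -/
theorem stmt10 (q w : ℍ[ℝ]) (hq : ‖q‖ = 1) (hw : ‖w‖ = 1)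
    (hz2 : z2 q ≠ 0) (hD : z1 w * z2 q - z2 w * z1 q ≠ 0) :
    z2 (q * w⁻¹) ≠ 0 ∧
    z1 (q * w⁻¹) / z2 (q * w⁻¹) =
      ((starRingEnd ℂ) (z1 w) * (z1 q / z2 q) + (starRingEnd ℂ) (z2 w)) /
        (-(z2 w) * (z1 q / z2 q) + z1 w) :=
  stmt10_general q w hz2 hD
end
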